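/- arXiv:2203.11783 — 6 statements merged into one kernel-verified Lean document; each statement's English description precedes it below -/
import Mathlib

section
/- Suppose valuations are parameterized by type: U(x;θ) with ∂²U/∂x∂θ > 0 (marginal values strictly increasing in type) and U(0;θ)=0. Then the final price p^f(θ) = (U(λ;θ) - U(1-λ;θ))/λ is strictly increasing in θ. Consequently, under CMRA-truthful bidding with non-decreasing marginal values, the weaker bidder submits the additional bid of 0 on 1-λ first, and the auction ends at min{p_1^f, p_2^f} = p^f(min{θ_1,θ_2}) with the efficient allocation assigning λ to the stronger bidder. -/
/-- With marginal values strictly increasing in type, the final price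
p^f(θ) = (U(λ;θ) - U(1-λ;θ))/λ is strictly increasing in θ; hence the weaker bidder
bids 0 on 1-λ first and the auction ends at min{p_1^f,p_2^f} = p^f(min{θ_1,θ_2}). -/
theorem final_price_increasing_in_type
    (lam tlo thi : ℝ) (hlam : 1/2 < lam ∧ lam < 1) (htype : tlo ≤ thi)
    (U u : ℝ → ℝ → ℝ)  -- U x θ, u x θ
    (hU0 : ∀ θ ∈ Set.Icc tlo thi, U 0 θ = 0)
    (hderiv : ∀ θ ∈ Set.Icc tlo thi, ∀ x ∈ Set.Icc (0:ℝ) lam,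
      HasDerivAt (fun y => U y θ) (u x θ) x)
    (hupos : ∀ θ ∈ Set.Icc tlo thi, ∀ x ∈ Set.Icc (0:ℝ) lam, 0 < u x θ)
    (hundec : ∀ θ ∈ Set.Icc tlo thi, MonotoneOn (fun x => u x θ) (Set.Icc (0:ℝ) lam))
    (huθ : ∀ x ∈ Set.Icc (0:ℝ) lam, StrictMonoOn (fun θ => u x θ) (Set.Icc tlo thi)) :
    StrictMonoOn (fun θ => (U lam θ - U (1 - lam) θ) / lam) (Set.Icc tlo thi) ∧
    (∀ θ₁ ∈ Set.Icc tlo thi, ∀ θ₂ ∈ Set.Icc tlo thi,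
      min ((U lam θ₁ - U (1 - lam) θ₁) / lam) ((U lam θ₂ - U (1 - lam) θ₂) / lam)
        = (U lam (min θ₁ θ₂) - U (1 - lam) (min θ₁ θ₂)) / lam) := by
  obtain ⟨hl1, hl2⟩ := hlam
  have hlpos : (0:ℝ) < lam := by linarith
  have hsub : Set.Icc (1-lam) lam ⊆ Set.Icc (0:ℝ) lam := by
    intro x hx; exact ⟨by linarith [hx.1], hx.2⟩
  have hmono : StrictMonoOn (fun θ => (U lam θ - U (1 - lam) θ) / lam) (Set.Icc tlo thi) := by
    intro a ha b hb hab
    have key : U lam a - U (1-lam) a < U lam b - U (1-lam) b := by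
      set F := fun x => U x b - U x a with hFdef
      have hF : ∀ x ∈ Set.Icc (0:ℝ) lam, HasDerivAt F (u x b - u x a) x := fun x hx =>
        (hderiv b hb x hx).sub (hderiv a ha x hx)
      have hFmono : StrictMonoOn F (Set.Icc (1-lam) lam) := by
        apply strictMonoOn_of_deriv_pos (convex_Icc _ _)
        · intro x hx
          exact ((hF x (hsub hx)).continuousAt).continuousWithinAt
        · intro x hx
          rw [interior_Icc] at hx
          have hx' : x ∈ Set.Icc (0:ℝ) lam := hsub ⟨le_of_lt hx.1, le_of_lt hx.2⟩
          rw [(hF x hx').deriv]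
          have := huθ x hx' ha hb hab
          simpa using sub_pos.mpr this
      have h1 : F (1-lam) < F lam :=
        hFmono ⟨le_refl _, by linarith⟩ ⟨by linarith, le_refl _⟩ (by linarith)
      simp only [hFdef] at h1
      linarith
    exact div_lt_div_of_pos_right key hlpos
  refine ⟨hmono, ?_⟩
  intro θ₁ h₁ θ₂ h₂
  have hmo := hmono.monotoneOn
  rcases le_total θ₁ θ₂ with h | h
  · rw [min_eq_left h, min_eq_left (hmo h₁ h₂ h)]
  · rw [min_eq_right h, min_eq_right (hmo h₂ h₁ h)]
end

section
/- Suppose both bidders have strictly decreasing marginal values and let (x_1*, x_2*) be the interior efficient allocation with clearing price p* = u_1(x_1*) = u_2(x_2*), x_1*+x_2* = 1, 1-λ < x_i* < λ. Then for each bidder i, U_i(λ) - U_i(x_i*) < p*·(λ - x_i*). Consequently, at clock price p*, the sum of truthful bids on the efficient allocation, B_1(x_1*;p*) + B_2(x_2*;p*) = p*, strictly exceeds each bidder's truthful bid on λ, B_i(λ;p*) = U_i(λ) - U_i(x_i*) + p*·x_i*. -/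
lemma key_ineq (lam x p : ℝ) (hlam1 : lam < 1) (hx0 : 0 < x) (hxl : x < lam)
    (U u : ℝ → ℝ)
    (hd : ∀ y ∈ Set.Icc (0:ℝ) lam, HasDerivAt U (u y) y)
    (hdec : StrictAntiOn u (Set.Icc (0:ℝ) lam))
    (hfoc : u x = p) : U lam - U x < p * (lam - x) := by
  have hxmem : x ∈ Set.Icc (0:ℝ) lam := ⟨le_of_lt hx0, le_of_lt hxl⟩
  have hcont : ContinuousOn U (Set.Icc x lam) := fun y hy =>
    ((hd y ⟨le_trans hxmem.1 hy.1, hy.2⟩).continuousAt).continuousWithinAt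
  have hderiv : ∀ y ∈ Set.Ioo x lam, HasDerivAt U (u y) y := fun y hy =>
    hd y ⟨le_trans (le_of_lt hx0) (le_of_lt hy.1), le_of_lt hy.2⟩
  obtain ⟨c, hc, hc'⟩ := exists_hasDerivAt_eq_slope U u hxl hcont hderiv
  have hcmem : c ∈ Set.Icc (0:ℝ) lam := ⟨le_trans (le_of_lt hx0) (le_of_lt hc.1), le_of_lt hc.2⟩
  have hlt : u c < u x := hdec hxmem hcmem hc.1
  have h : (U lam - U x) / (lam - x) < p := by rw [← hc', ← hfoc]; exact hlt
  have hpos : (0:ℝ) < lam - x := by linarith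
  calc U lam - U x = (U lam - U x) / (lam - x) * (lam - x) := by field_simp
    _ < p * (lam - x) := by exact mul_lt_mul_of_pos_right h hpos

/-- With strictly decreasing marginal values, at the clearing price p* the sum
of truthful bids on the efficient allocation (= p*) strictly exceeds each bidder's truthful
bid on λ, since U_i(λ) - U_i(x_i*) < p*(λ - x_i*). -/
theorem efficient_bids_beat_lambda_bid
    (lam : ℝ) (hlam : 1/2 < lam ∧ lam < 1)
    (U₁ U₂ u₁ u₂ : ℝ → ℝ)
    (hU₁0 : U₁ 0 = 0) (hU₂0 : U₂ 0 = 0)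
    (hd₁ : ∀ x ∈ Set.Icc (0:ℝ) lam, HasDerivAt U₁ (u₁ x) x)
    (hd₂ : ∀ x ∈ Set.Icc (0:ℝ) lam, HasDerivAt U₂ (u₂ x) x)
    (hpos₁ : ∀ x ∈ Set.Icc (0:ℝ) lam, 0 < u₁ x)
    (hpos₂ : ∀ x ∈ Set.Icc (0:ℝ) lam, 0 < u₂ x)
    (hdec₁ : StrictAntiOn u₁ (Set.Icc (0:ℝ) lam))
    (hdec₂ : StrictAntiOn u₂ (Set.Icc (0:ℝ) lam))
    (x₁ x₂ pstar : ℝ)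
    (hint₁ : 1 - lam < x₁ ∧ x₁ < lam) (hint₂ : 1 - lam < x₂ ∧ x₂ < lam)
    (hsum : x₁ + x₂ = 1)
    (hfoc : u₁ x₁ = pstar ∧ u₂ x₂ = pstar) :
    (U₁ lam - U₁ x₁ < pstar * (lam - x₁)) ∧
    (U₂ lam - U₂ x₂ < pstar * (lam - x₂)) ∧
    (U₁ lam - U₁ x₁ + pstar * x₁ < pstar) ∧
    (U₂ lam - U₂ x₂ + pstar * x₂ < pstar) := by
  have hx₁0 : 0 < x₁ := by linarith [hint₁.1, hlam.2]
  have hx₂0 : 0 < x₂ := by linarith [hint₂.1, hlam.2]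
  have h1 := key_ineq lam x₁ pstar hlam.2 hx₁0 hint₁.2 U₁ u₁ hd₁ hdec₁ hfoc.1
  have h2 := key_ineq lam x₂ pstar hlam.2 hx₂0 hint₂.2 U₂ u₂ hd₂ hdec₂ hfoc.2
  have hp : 0 < pstar := hfoc.1 ▸ hpos₁ x₁ ⟨le_of_lt hx₁0, le_of_lt hint₁.2⟩
  refine ⟨h1, h2, ?_, ?_⟩ <;> nlinarith [hlam.2]
end

section
/- Under strictly decreasing marginal values, the ending clock price p̃* of the CMRA under CMRA-truthful bidding is strictly below the clock-auction clearing price p* = u_1(x_1*) = u_2(x_2*), and ex-post revenue under CMRA-truthful bidding, B_1(x_1*;p̃*) + B_2(x_2*;p̃*), is strictly below the clock-auction revenue p*. Specifically, for any p ≤ p*, each winning truthful bid satisfies B_i(x_i*;p) = U_i(x_i*) - V_i(p) ≤ p·x_i* ≤ p*·x_i*. -/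
/-!
At the clearing price `p*` each bidder's truthful indirect utility `V_i(p*)` is attained at
`x_i*`, because `U_i(x) - p* x` has derivative `u_i - p*`, which is positive left of `x_i*`
and negative right of it. Hence the efficient allocation raises `p* (x₁* + x₂*) = p*`, while a
single bidder's bid for `λ` is below `p* λ < p*`; so the efficient allocation already wins
strictly at `p*`, and the clock must have stopped earlier. Revenue at any `p` is at most
`p (x₁* + x₂*) = p`, since `V_i(p) ≥ U_i(x_i*) - p x_i*`.
-/

open Set

section ProfitMaximizer

variable {U u : ℝ → ℝ} {a b x p : ℝ}

lemma hasDerivAt_sub_const_mul {y : ℝ} (hd : HasDerivAt U (u y) y) :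
    HasDerivAt (fun z => U z - p * z) (u y - p) y := by
  have h := hd.sub ((hasDerivAt_id' y).const_mul p)
  rwa [mul_one] at h

lemma strictMonoOn_sub_const_mul_Icc_left (hd : ∀ y ∈ Icc a b, HasDerivAt U (u y) y)
    (hdec : StrictAntiOn u (Icc a b)) (hx : x ∈ Icc a b) (hux : u x = p) :
    StrictMonoOn (fun z => U z - p * z) (Icc a x) := by
  have hsub : Icc a x ⊆ Icc a b := Icc_subset_Icc_right hx.2
  refine strictMonoOn_of_deriv_pos (convex_Icc a x)
    (fun y hy => (hasDerivAt_sub_const_mul (hd y (hsub hy))).continuousAt.continuousWithinAt)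
    fun y hy => ?_
  rw [interior_Icc] at hy
  have hy' : y ∈ Icc a b := hsub (Ioo_subset_Icc_self hy)
  rw [(hasDerivAt_sub_const_mul (hd y hy')).deriv, sub_pos, ← hux]
  exact hdec hy' hx hy.2

lemma strictAntiOn_sub_const_mul_Icc_right (hd : ∀ y ∈ Icc a b, HasDerivAt U (u y) y)
    (hdec : StrictAntiOn u (Icc a b)) (hx : x ∈ Icc a b) (hux : u x = p) :
    StrictAntiOn (fun z => U z - p * z) (Icc x b) := by
  have hsub : Icc x b ⊆ Icc a b := Icc_subset_Icc_left hx.1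
  refine strictAntiOn_of_deriv_neg (convex_Icc x b)
    (fun y hy => (hasDerivAt_sub_const_mul (hd y (hsub hy))).continuousAt.continuousWithinAt)
    fun y hy => ?_
  rw [interior_Icc] at hy
  have hy' : y ∈ Icc a b := hsub (Ioo_subset_Icc_self hy)
  rw [(hasDerivAt_sub_const_mul (hd y hy')).deriv, sub_neg, ← hux]
  exact hdec hx hy' hy.1

lemma sub_const_mul_lt_of_ne (hd : ∀ y ∈ Icc a b, HasDerivAt U (u y) y)
    (hdec : StrictAntiOn u (Icc a b)) (hx : x ∈ Icc a b) (hux : u x = p)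
    {y : ℝ} (hy : y ∈ Icc a b) (hyx : y ≠ x) :
    U y - p * y < U x - p * x := by
  rcases hyx.lt_or_gt with hlt | hgt
  · exact strictMonoOn_sub_const_mul_Icc_left hd hdec hx hux ⟨hy.1, hlt.le⟩
      ⟨hx.1, le_rfl⟩ hlt
  · exact strictAntiOn_sub_const_mul_Icc_right hd hdec hx hux ⟨le_rfl, hx.2⟩
      ⟨hgt.le, hy.2⟩ hgt

lemma eq_of_isGreatest_sub_const_mul (hd : ∀ y ∈ Icc a b, HasDerivAt U (u y) y)
    (hdec : StrictAntiOn u (Icc a b)) (hx : x ∈ Icc a b) (hux : u x = p) {V : ℝ}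
    (hV : IsGreatest ((fun z => U z - p * z) '' Icc a b) V) :
    V = U x - p * x := by
  obtain ⟨y, hy, rfl⟩ := hV.1
  refine le_antisymm ?_ (hV.2 ⟨x, hx, rfl⟩)
  rcases eq_or_ne y x with rfl | hyx
  · exact le_rfl
  · exact (sub_const_mul_lt_of_ne hd hdec hx hux hy hyx).le

end ProfitMaximizer
theorem cmra_truthful_revenue_below_clock_general
    (lam : ℝ) (hlam : 1/2 < lam ∧ lam < 1)
    (U₁ U₂ u₁ u₂ : ℝ → ℝ)
    (hd₁ : ∀ x ∈ Set.Icc (0:ℝ) lam, HasDerivAt U₁ (u₁ x) x)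
    (hd₂ : ∀ x ∈ Set.Icc (0:ℝ) lam, HasDerivAt U₂ (u₂ x) x)
    (hpos₁ : ∀ x ∈ Set.Icc (0:ℝ) lam, 0 < u₁ x)
    (hdec₁ : StrictAntiOn u₁ (Set.Icc (0:ℝ) lam))
    (hdec₂ : StrictAntiOn u₂ (Set.Icc (0:ℝ) lam))
    (V₁ V₂ : ℝ → ℝ)
    (hV₁ : ∀ p : ℝ, 0 ≤ p →
      IsGreatest ((fun x => U₁ x - p * x) '' Set.Icc (0:ℝ) lam) (V₁ p))
    (hV₂ : ∀ p : ℝ, 0 ≤ p →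
      IsGreatest ((fun x => U₂ x - p * x) '' Set.Icc (0:ℝ) lam) (V₂ p))
    (x₁ x₂ pstar : ℝ)
    (hint₁ : 1 - lam < x₁ ∧ x₁ < lam) (hint₂ : 1 - lam < x₂ ∧ x₂ < lam)
    (hsum : x₁ + x₂ = 1)
    (hfoc : u₁ x₁ = pstar ∧ u₂ x₂ = pstar)
    (ptilde : ℝ) (hptilde0 : 0 ≤ ptilde)
    -- ptilde is the smallest price at which the efficient allocation is revenue-maximizing:
    (hend : (U₁ x₁ - V₁ ptilde) + (U₂ x₂ - V₂ ptilde)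
              = max (U₁ lam - V₁ ptilde) (U₂ lam - V₂ ptilde))
    (hmin : ∀ p : ℝ, 0 ≤ p → p < ptilde →
      (U₁ x₁ - V₁ p) + (U₂ x₂ - V₂ p) < max (U₁ lam - V₁ p) (U₂ lam - V₂ p)) :
    ptilde < pstar ∧
    (U₁ x₁ - V₁ ptilde) + (U₂ x₂ - V₂ ptilde) < pstar ∧
    (∀ p : ℝ, 0 ≤ p → p ≤ pstar →
      (U₁ x₁ - V₁ p ≤ p * x₁ ∧ p * x₁ ≤ pstar * x₁) ∧
      (U₂ x₂ - V₂ p ≤ p * x₂ ∧ p * x₂ ≤ pstar * x₂)) := by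
  have hx₁ : x₁ ∈ Icc 0 lam := ⟨by linarith, hint₁.2.le⟩
  have hx₂ : x₂ ∈ Icc 0 lam := ⟨by linarith, hint₂.2.le⟩
  have hlam_mem : lam ∈ Icc 0 lam := ⟨by linarith, le_rfl⟩
  have hpstar : 0 < pstar := hfoc.1 ▸ hpos₁ x₁ hx₁
  have hbid : ∀ p : ℝ, 0 ≤ p → p ≤ pstar →
      (U₁ x₁ - V₁ p ≤ p * x₁ ∧ p * x₁ ≤ pstar * x₁) ∧
      (U₂ x₂ - V₂ p ≤ p * x₂ ∧ p * x₂ ≤ pstar * x₂) := by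
    intro p hp hp_le
    have h₁ := (hV₁ p hp).2 ⟨x₁, hx₁, rfl⟩
    have h₂ := (hV₂ p hp).2 ⟨x₂, hx₂, rfl⟩
    exact ⟨⟨by linarith, by gcongr; exact hx₁.1⟩, ⟨by linarith, by gcongr; exact hx₂.1⟩⟩
  have hV₁x := eq_of_isGreatest_sub_const_mul hd₁ hdec₁ hx₁ hfoc.1 (hV₁ pstar hpstar.le)
  have hV₂x := eq_of_isGreatest_sub_const_mul hd₂ hdec₂ hx₂ hfoc.2 (hV₂ pstar hpstar.le)
  have hU₁lam := sub_const_mul_lt_of_ne hd₁ hdec₁ hx₁ hfoc.1 hlam_mem hint₁.2.ne'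
  have hU₂lam := sub_const_mul_lt_of_ne hd₂ hdec₂ hx₂ hfoc.2 hlam_mem hint₂.2.ne'
  have hpstar_lam : pstar * lam < pstar := mul_lt_of_lt_one_right hpstar hlam.2
  have hsplit (p : ℝ) : p * x₁ + p * x₂ = p := by rw [← mul_add, hsum, mul_one]
  have hwins : max (U₁ lam - V₁ pstar) (U₂ lam - V₂ pstar)
      < (U₁ x₁ - V₁ pstar) + (U₂ x₂ - V₂ pstar) := by
    rw [hV₁x, hV₂x]
    refine max_lt ?_ ?_ <;> linarith [hsplit pstar]
  have hlt : ptilde < pstar := by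
    by_contra! hge
    rcases hge.eq_or_lt with rfl | hgt
    · exact hwins.ne' hend
    · exact (hmin pstar hpstar.le hgt).not_gt hwins
  obtain ⟨⟨h₁, -⟩, h₂, -⟩ := hbid ptilde hptilde0 hlt.le
  exact ⟨hlt, by linarith [hsplit ptilde], hbid⟩

/-- With strictly decreasing marginal values, the CMRA under CMRA-truthful
bidding ends at a clock price p̃* strictly below the clearing price p*, with ex-post
revenue strictly below p*; moreover each winning truthful bid satisfies
B_i(x_i*;p) = U_i(x_i*) - V_i(p) ≤ p·x_i* ≤ p*·x_i* for any 0 ≤ p ≤ p*. -/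
theorem cmra_truthful_revenue_below_clock
    (lam : ℝ) (hlam : 1/2 < lam ∧ lam < 1)
    (U₁ U₂ u₁ u₂ : ℝ → ℝ)
    (hU₁0 : U₁ 0 = 0) (hU₂0 : U₂ 0 = 0)
    (hd₁ : ∀ x ∈ Set.Icc (0:ℝ) lam, HasDerivAt U₁ (u₁ x) x)
    (hd₂ : ∀ x ∈ Set.Icc (0:ℝ) lam, HasDerivAt U₂ (u₂ x) x)
    (hpos₁ : ∀ x ∈ Set.Icc (0:ℝ) lam, 0 < u₁ x)
    (hpos₂ : ∀ x ∈ Set.Icc (0:ℝ) lam, 0 < u₂ x)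
    (hdec₁ : StrictAntiOn u₁ (Set.Icc (0:ℝ) lam))
    (hdec₂ : StrictAntiOn u₂ (Set.Icc (0:ℝ) lam))
    (V₁ V₂ : ℝ → ℝ)
    (hV₁ : ∀ p : ℝ, 0 ≤ p →
      IsGreatest ((fun x => U₁ x - p * x) '' Set.Icc (0:ℝ) lam) (V₁ p))
    (hV₂ : ∀ p : ℝ, 0 ≤ p →
      IsGreatest ((fun x => U₂ x - p * x) '' Set.Icc (0:ℝ) lam) (V₂ p))
    (x₁ x₂ pstar : ℝ)
    (hint₁ : 1 - lam < x₁ ∧ x₁ < lam) (hint₂ : 1 - lam < x₂ ∧ x₂ < lam)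
    (hsum : x₁ + x₂ = 1)
    (hfoc : u₁ x₁ = pstar ∧ u₂ x₂ = pstar)
    (ptilde : ℝ) (hptilde0 : 0 ≤ ptilde)
    -- ptilde is the smallest price at which the efficient allocation is revenue-maximizing:
    (hend : (U₁ x₁ - V₁ ptilde) + (U₂ x₂ - V₂ ptilde)
              = max (U₁ lam - V₁ ptilde) (U₂ lam - V₂ ptilde))
    (hmin : ∀ p : ℝ, 0 ≤ p → p < ptilde →
      (U₁ x₁ - V₁ p) + (U₂ x₂ - V₂ p) < max (U₁ lam - V₁ p) (U₂ lam - V₂ p)) :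
    ptilde < pstar ∧
    (U₁ x₁ - V₁ ptilde) + (U₂ x₂ - V₂ ptilde) < pstar ∧
    (∀ p : ℝ, 0 ≤ p → p ≤ pstar →
      (U₁ x₁ - V₁ p ≤ p * x₁ ∧ p * x₁ ≤ pstar * x₁) ∧
      (U₂ x₂ - V₂ p ≤ p * x₂ ∧ p * x₂ ≤ pstar * x₂)) :=
  cmra_truthful_revenue_below_clock_general lam hlam U₁ U₂ u₁ u₂ hd₁ hd₂ hpos₁ hdec₁ hdec₂ V₁ V₂ hV₁
    hV₂ x₁ x₂ pstar hint₁ hint₂ hsum hfoc ptilde hptilde0 hend hmin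
end

section
/- Suppose bidder j plays the CMRA-truthful strategy with convex strictly increasing valuation U_j, U_j(0)=0, and bidder i with convex strictly increasing valuation U_i considers winning quantity x ∈ [1-λ, λ] with a deviating bid D_i(x). Any winning deviating bid must satisfy D_i(x) ≥ U_j(λ) - U_j(1-x). If θ_i ≥ θ_j (u_i ≥ u_j pointwise), then for every x ∈ [1-λ,λ], U_i(x) - (U_j(λ) - U_j(1-x)) ≤ U_i(λ) - (U_j(λ) - U_j(1-λ)); i.e., no deviation yields more surplus than the CMRA-truthful outcome of winning λ at total price U_j(λ) - U_j(1-λ). -/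
/-!
The truthful outcome gives bidder `i` the quantity `λ` against `1 - λ`, so it suffices to show
`Ui x + Uj (1 - x) ≤ Ui λ + Uj (1 - λ)` on `[1 - λ, λ]`. Split `Ui = (Ui - Uj) + Uj`:
the difference `Ui - Uj` is monotone because `uj ≤ ui`, and for the convex `Uj` the pair
`(1 - λ, λ)` is more spread out than `(x, 1 - x)`, which has the same sum.
-/

open Set

lemma monotoneOn_sub_of_hasDerivAt_le {s : Set ℝ} (hs : Convex ℝ s) {f g f' g' : ℝ → ℝ}
    (hf : ∀ x ∈ s, HasDerivAt f (f' x) x) (hg : ∀ x ∈ s, HasDerivAt g (g' x) x)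
    (hle : ∀ x ∈ s, g' x ≤ f' x) : MonotoneOn (fun x => f x - g x) s :=
  monotoneOn_of_hasDerivWithinAt_nonneg hs
    (fun x hx => ((hf x hx).sub (hg x hx)).continuousAt.continuousWithinAt)
    (fun x hx => ((hf x (interior_subset hx)).sub (hg x (interior_subset hx))).hasDerivWithinAt)
    (fun x hx => sub_nonneg.2 (hle x (interior_subset hx)))

lemma ConvexOn.map_add_map_le_of_add_eq {s : Set ℝ} {f : ℝ → ℝ} (hf : ConvexOn ℝ s f)
    {a b c d : ℝ} (ha : a ∈ s) (hb : b ∈ s) (hc : c ∈ Icc a b) (hsum : c + d = a + b) :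
    f c + f d ≤ f a + f b := by
  obtain ⟨hac, hcb⟩ := hc
  rcases hac.eq_or_lt with rfl | hlt
  · rw [show d = b by linarith]
  -- `c` and `d` are the convex combinations of `a` and `b` with swapped weights `t`, `1 - t`.
  set t := (b - c) / (b - a)
  have hba : b - a ≠ 0 := by linarith
  have ht₀ : 0 ≤ t := div_nonneg (by linarith) (by linarith)
  have ht₁ : 0 ≤ 1 - t := by
    rw [sub_nonneg, div_le_one (by linarith)]; linarith
  have hc_eq : t • a + (1 - t) • b = c := by
    simp only [smul_eq_mul, t]; field_simp; ring
  have hd_eq : (1 - t) • a + t • b = d := by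
    rw [show d = a + b - c by linarith]; simp only [smul_eq_mul, t]; field_simp; ring
  have hfc := hf.2 ha hb ht₀ ht₁ (by ring)
  have hfd := hf.2 ha hb ht₁ ht₀ (by ring)
  rw [hc_eq] at hfc
  rw [hd_eq] at hfd
  simp only [smul_eq_mul] at hfc hfd
  linarith

theorem no_profitable_deviation_strong_bidder_general
    (lam : ℝ) (hlam : 1/2 < lam ∧ lam < 1)
    (Ui Uj ui uj : ℝ → ℝ)
    (hconvj : ConvexOn ℝ (Set.Icc (0:ℝ) lam) Uj)
    (hdi : ∀ x ∈ Set.Icc (0:ℝ) lam, HasDerivAt Ui (ui x) x)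
    (hdj : ∀ x ∈ Set.Icc (0:ℝ) lam, HasDerivAt Uj (uj x) x)
    (hdom : ∀ x ∈ Set.Icc (0:ℝ) lam, uj x ≤ ui x) :
    (∀ x ∈ Set.Icc (1 - lam) lam, ∀ D : ℝ,
      Uj lam ≤ D + Uj (1 - x) → Uj lam - Uj (1 - x) ≤ D) ∧
    (∀ x ∈ Set.Icc (1 - lam) lam,
      Ui x - (Uj lam - Uj (1 - x)) ≤ Ui lam - (Uj lam - Uj (1 - lam))) := by
  obtain ⟨hhalf, hlt⟩ := hlam
  refine ⟨fun x _ D hD => by linarith, fun x hx => ?_⟩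
  have hlam_mem : lam ∈ Icc (0:ℝ) lam := ⟨by linarith, le_rfl⟩
  have hx_mem : x ∈ Icc (0:ℝ) lam := ⟨by linarith [hx.1], hx.2⟩
  have hdiff : Ui x - Uj x ≤ Ui lam - Uj lam :=
    monotoneOn_sub_of_hasDerivAt_le (convex_Icc 0 lam) hdi hdj hdom hx_mem hlam_mem hx.2
  have hspread : Uj x + Uj (1 - x) ≤ Uj (1 - lam) + Uj lam :=
    hconvj.map_add_map_le_of_add_eq ⟨by linarith, by linarith⟩ hlam_mem hx (by ring)
  linarith

/-- Against a CMRA-truthful opponent j, any winning deviating bid on x must be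
at least U_j(λ) - U_j(1-x), and for a stronger bidder i no such deviation improves on the
CMRA-truthful outcome of winning λ at total price U_j(λ) - U_j(1-λ). -/
theorem no_profitable_deviation_strong_bidder
    (lam : ℝ) (hlam : 1/2 < lam ∧ lam < 1)
    (Ui Uj ui uj : ℝ → ℝ)
    (hUi0 : Ui 0 = 0) (hUj0 : Uj 0 = 0)
    (hconvi : ConvexOn ℝ (Set.Icc (0:ℝ) lam) Ui)
    (hconvj : ConvexOn ℝ (Set.Icc (0:ℝ) lam) Uj)
    (hmonoi : StrictMonoOn Ui (Set.Icc (0:ℝ) lam))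
    (hmonoj : StrictMonoOn Uj (Set.Icc (0:ℝ) lam))
    (hdi : ∀ x ∈ Set.Icc (0:ℝ) lam, HasDerivAt Ui (ui x) x)
    (hdj : ∀ x ∈ Set.Icc (0:ℝ) lam, HasDerivAt Uj (uj x) x)
    (hdom : ∀ x ∈ Set.Icc (0:ℝ) lam, uj x ≤ ui x) :
    (∀ x ∈ Set.Icc (1 - lam) lam, ∀ D : ℝ,
      Uj lam ≤ D + Uj (1 - x) → Uj lam - Uj (1 - x) ≤ D) ∧
    (∀ x ∈ Set.Icc (1 - lam) lam,
      Ui x - (Uj lam - Uj (1 - x)) ≤ Ui lam - (Uj lam - Uj (1 - lam))) :=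
  no_profitable_deviation_strong_bidder_general lam hlam Ui Uj ui uj hconvj hdi hdj hdom
end

section
/- Under the quadratic-in-type assumption and the normalization U(λ;θ) - U(1-λ;θ) = θ, the riskless demand reduction profile is a Bayes-Nash equilibrium (i.e., g(θ) ≥ 0 for all θ ∈ [θ̲,θ̄], where g is the collusion incentive function) if the condition E[θ_j] ≥ U(λ;θ̄) - U(1/2;θ̄) holds, given additionally that g(θ̲) ≥ 0. Conversely, if E[θ_j] < U(λ;θ̄) - U(1/2;θ̄) then g(θ̄) < 0 and collusion fails for the highest type. -/
/-!
The incentive `g` has derivative `U'(1/2;θ) - U'(1-λ;θ) - F θ`. Since `U` is affine in the type,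
the first two terms do not depend on `θ`, while `F` is nondecreasing; so `g` is concave and is
nonnegative on `[θ̲, θ̄]` as soon as it is at both endpoints. With `F θ̄ = 1` and the
normalization, `g θ̄ = U(1/2;θ̄) - U(λ;θ̄) + E[θ]`, which gives both directions at the top type.
-/

open Set

theorem concaveOn_univ_of_hasDerivAt_of_antitone {g g' : ℝ → ℝ}
    (hg : ∀ x, HasDerivAt g (g' x) x) (hg' : Antitone g') : ConcaveOn ℝ univ g := by
  have hderiv : deriv g = g' := funext fun x => (hg x).deriv
  exact Antitone.concaveOn_univ_of_deriv (fun x => (hg x).differentiableAt) (hderiv ▸ hg')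

noncomputable def collusionIncentive (U : ℝ → ℝ → ℝ) (F f : ℝ → ℝ) (lam tlo θ : ℝ) : ℝ :=
  U (1/2) θ - F θ * θ - U (1 - lam) θ + ∫ t in tlo..θ, t * f t

section Incentive

variable {U U' : ℝ → ℝ → ℝ} {F f : ℝ → ℝ} {lam tlo : ℝ}

theorem hasDerivAt_collusionIncentive (hf : Continuous f) (hF : ∀ θ, HasDerivAt F (f θ) θ)
    (hUd : ∀ x θ, HasDerivAt (fun t => U x t) (U' x θ) θ) (θ : ℝ) :
    HasDerivAt (collusionIncentive U F f lam tlo) (U' (1/2) θ - U' (1 - lam) θ - F θ) θ := by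
  have hint : HasDerivAt (fun u => ∫ t in tlo..u, t * f t) (θ * f θ) θ :=
    ((continuous_id.mul hf).integral_hasStrictDerivAt tlo θ).hasDerivAt
  have hFθ : HasDerivAt (fun t => F t * t) (f θ * θ + F θ * 1) θ := (hF θ).mul (hasDerivAt_id θ)
  exact ((((hUd (1/2) θ).sub hFθ).sub (hUd (1 - lam) θ)).add hint).congr_deriv (by ring)

theorem concaveOn_collusionIncentive (hf : Continuous f) (hfpos : ∀ θ, 0 ≤ f θ)
    (hF : ∀ θ, HasDerivAt F (f θ) θ)
    (hUd : ∀ x θ, HasDerivAt (fun t => U x t) (U' x θ) θ)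
    (hUdd : ∀ x θ, HasDerivAt (fun t => U' x t) 0 θ) :
    ConcaveOn ℝ univ (collusionIncentive U F f lam tlo) := by
  have hU'const : ∀ x θ θ', U' x θ = U' x θ' := fun x =>
    is_const_of_deriv_eq_zero (fun θ => (hUdd x θ).differentiableAt) fun θ => (hUdd x θ).deriv
  have hFmono : Monotone F := monotone_of_hasDerivAt_nonneg hF hfpos
  refine concaveOn_univ_of_hasDerivAt_of_antitone
    (hasDerivAt_collusionIncentive hf hF hUd) fun a b hab => ?_
  rw [hU'const (1/2) a b, hU'const (1 - lam) a b]
  linarith [hFmono hab]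

theorem collusionIncentive_eq_of_cdf_eq_one {thi : ℝ} (hFthi : F thi = 1)
    (hnorm : U lam thi - U (1 - lam) thi = thi) :
    collusionIncentive U F f lam tlo thi
      = U (1/2) thi - U lam thi + ∫ t in tlo..thi, t * f t := by
  rw [collusionIncentive, hFthi]
  linarith

end Incentive

theorem collusion_condition_general
    (lam tlo thi : ℝ)
    (U U' : ℝ → ℝ → ℝ)
    (F f : ℝ → ℝ)
    (hf : Continuous f) (hfpos : ∀ θ, 0 ≤ f θ)
    (hF : ∀ θ, HasDerivAt F (f θ) θ)
    (hFthi : F thi = 1)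
    (hUd : ∀ x θ, HasDerivAt (fun t => U x t) (U' x θ) θ)
    (hUdd : ∀ x θ, HasDerivAt (fun t => U' x t) 0 θ)
    (hnorm : ∀ θ, U lam θ - U (1 - lam) θ = θ) :
    ((0 ≤ U (1/2) tlo - F tlo * tlo - U (1 - lam) tlo + ∫ t in tlo..tlo, t * f t) →
     ((U lam thi - U (1/2) thi) ≤ ∫ t in tlo..thi, t * f t) →
     ∀ θ ∈ Set.Icc tlo thi,
       0 ≤ U (1/2) θ - F θ * θ - U (1 - lam) θ + ∫ t in tlo..θ, t * f t) ∧
    ((∫ t in tlo..thi, t * f t) < U lam thi - U (1/2) thi →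
       U (1/2) thi - F thi * thi - U (1 - lam) thi + (∫ t in tlo..thi, t * f t) < 0) := by
  have htop := collusionIncentive_eq_of_cdf_eq_one (f := f) (tlo := tlo) hFthi (hnorm thi)
  refine ⟨fun hlo hmean θ hθ => ?_, fun hmean => ?_⟩
  · have hconc := concaveOn_collusionIncentive (lam := lam) (tlo := tlo) hf hfpos hF hUd hUdd
    have hhi : 0 ≤ collusionIncentive U F f lam tlo thi := by linarith
    exact (le_min hlo hhi).trans (hconc.min_le_of_mem_Icc trivial trivial hθ)
  · change collusionIncentive U F f lam tlo thi < 0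
    linarith

/-- Under the quadratic-in-type assumption and normalization
U(λ;θ)-U(1-λ;θ) = θ, collusion (g ≥ 0 on [θ̲,θ̄]) holds if E[θ] ≥ U(λ;θ̄) - U(1/2;θ̄)
(given g(θ̲) ≥ 0); conversely if E[θ] < U(λ;θ̄) - U(1/2;θ̄) then g(θ̄) < 0. -/
theorem collusion_condition
    (lam tlo thi : ℝ) (hlam : 1/2 < lam ∧ lam < 1) (htype : tlo < thi)
    (U U' : ℝ → ℝ → ℝ)
    (F f : ℝ → ℝ)
    (hf : Continuous f) (hfpos : ∀ θ, 0 ≤ f θ)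
    (hF : ∀ θ, HasDerivAt F (f θ) θ)
    (hFthi : F thi = 1)
    (hUd : ∀ x θ, HasDerivAt (fun t => U x t) (U' x θ) θ)
    (hUdd : ∀ x θ, HasDerivAt (fun t => U' x t) 0 θ)
    (hnorm : ∀ θ, U lam θ - U (1 - lam) θ = θ) :
    ((0 ≤ U (1/2) tlo - F tlo * tlo - U (1 - lam) tlo + ∫ t in tlo..tlo, t * f t) →
     ((U lam thi - U (1/2) thi) ≤ ∫ t in tlo..thi, t * f t) →
     ∀ θ ∈ Set.Icc tlo thi,
       0 ≤ U (1/2) θ - F θ * θ - U (1 - lam) θ + ∫ t in tlo..θ, t * f t) ∧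
    ((∫ t in tlo..thi, t * f t) < U lam thi - U (1/2) thi →
       U (1/2) thi - F thi * thi - U (1 - lam) thi + (∫ t in tlo..thi, t * f t) < 0) :=
  collusion_condition_general lam tlo thi U U' F f hf hfpos hF hFthi hUd hUdd hnorm
end

section
/- In the same discrete example (4 lots, two bidders, per-lot value 30, additive, cap 3), for every clock price p < 20 there is no feasible allocation (q_1,q_2) with q_1+q_2 ≤ 4, q_i ≤ 3 that both receives a non-negative CMRA-truthful bid from each bidder and maximizes revenue: any allocation accepting bids from both bidders yields revenue strictly less than 3p, the revenue from one bidder's headline demand alone. Hence under CMRA-truthful bidding the auction cannot end before the clock price reaches 20. -/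
/-- The CMRA-truthful bid value of a bidder in the discrete example at clock price `p`
on `q` lots: headline bid 3p on 3 lots; additional bid 30q - (90 - 3p) on q ∈ {1,2}. -/
noncomputable def exBid (q : ℕ) (p : ℝ) : ℝ :=
  if q = 3 then 3 * p else 30 * (q : ℝ) - 90 + 3 * p

/-- A quantity `q` receives a (non-negative) CMRA-truthful bid at clock price `p`. -/
noncomputable def exHasBid (q : ℕ) (p : ℝ) : Prop :=
  q = 3 ∨ (1 ≤ q ∧ q ≤ 2 ∧ 0 ≤ 30 * (q : ℝ) - 90 + 3 * p)

/-- In the discrete example, for every clock price p < 20 any feasible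
allocation receiving a non-negative CMRA-truthful bid from each bidder yields revenue
strictly less than 3p (one headline demand alone); hence the auction cannot end before
the clock reaches 20. -/
theorem discrete_example_no_early_end :
    ∀ p : ℝ, 0 ≤ p → p < 20 →
      ∀ q₁ q₂ : ℕ, q₁ + q₂ ≤ 4 → q₁ ≤ 3 → q₂ ≤ 3 →
        exHasBid q₁ p → exHasBid q₂ p →
        exBid q₁ p + exBid q₂ p < 3 * p := by
  intro p hp0 hp20 q₁ q₂ hsum h1 h2 hb1 hb2
  rcases hb1 with h3₁ | ⟨hl1, hu1, hnn1⟩ <;> rcases hb2 with h3₂ | ⟨hl2, hu2, hnn2⟩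
  · omega
  · -- q₁ = 3, so q₂ ≤ 1, hence q₂ = 1
    have hq2 : q₂ = 1 := by omega
    subst hq2
    norm_num at hnn2
    linarith
  · have hq1 : q₁ = 1 := by omega
    subst hq1
    norm_num at hnn1
    linarith
  · simp only [exBid]
    rw [if_neg (by omega), if_neg (by omega)]
    have hc1 : (q₁ : ℝ) ≤ 2 := by exact_mod_cast hu1
    have hc2 : (q₂ : ℝ) ≤ 2 := by exact_mod_cast hu2
    linarith
end
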